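/- arXiv:2103.08811 — 2 statements merged into one kernel-verified Lean document; each statement's English description precedes it below -/
import Mathlib

section
/- Let d ≥ 1 and let μ and ν be probability measures on ℝ^d, both absolutely continuous with respect to Lebesgue measure. Let R = ∇φ with φ convex satisfy R_#μ = ν, and let Q = ∇ψ with ψ convex satisfy Q_#ν = μ. Then Q(R(x)) = x for μ-almost every x ∈ ℝ^d, and R(Q(y)) = y for ν-almost every y ∈ ℝ^d. -/
/-!
Let `H = ψ* - φ`, where `ψ*` is the Fenchel conjugate of `ψ`, and let `S = ∇ψ ∘ ∇φ`, which
preserves `μ`. For `μ`-a.e. `x`, the gradient inequality for `φ` at `x` and the identity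
`ψ*(∇ψ y) = ⟪∇ψ y, y⟫ - ψ y` at `y = ∇φ x` give `H (S x) + gap x ≤ H x`, where
`gap x = ψ* x - (⟪x, y⟫ - ψ y) ≥ 0` is the Fenchel–Young gap. A function that can only decrease
along a measure-preserving map is invariant a.e., so the gap vanishes a.e.: `x` is a subgradient
of `ψ` at `y`, and differentiability of `ψ` there forces `x = ∇ψ y`. Convex functions are
locally Lipschitz, so by Rademacher's theorem `φ` and `ψ` are differentiable `μ`- and `ν`-a.e.
-/

open MeasureTheory Set Filter
open scoped RealInnerProductSpace

section Rademacher

variable {E G : Type*} [NormedAddCommGroup E] [NormedSpace ℝ E] [FiniteDimensional ℝ E]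
  [MeasurableSpace E] [BorelSpace E] [NormedAddCommGroup G] [NormedSpace ℝ G]
  [FiniteDimensional ℝ G]

theorem LocallyLipschitz.ae_differentiableAt {f : E → G} (hf : LocallyLipschitz f)
    (μ : Measure E) [μ.IsAddHaarMeasure] : ∀ᵐ x ∂μ, DifferentiableAt ℝ f x := by
  choose K U hU hfU using hf
  obtain ⟨s, hs, hcover⟩ := countable_cover_nhds_interior hU
  have hloc : ∀ x ∈ s, ∀ᵐ y ∂μ, y ∈ interior (U x) → DifferentiableAt ℝ f y := fun x _ =>
    ((hfU x).mono interior_subset).ae_differentiableWithinAt_of_mem.mono fun y hy hyU =>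
      (hy hyU).differentiableAt (isOpen_interior.mem_nhds hyU)
  filter_upwards [(ae_ball_iff hs).2 hloc] with y hy
  obtain ⟨x, hx, hyx⟩ := mem_iUnion₂.1 (hcover.symm ▸ mem_univ y)
  exact hy x hx hyx

end Rademacher

theorem ConvexOn.add_fderiv_le {E : Type*} [NormedAddCommGroup E] [NormedSpace ℝ E]
    {s : Set E} {f : E → ℝ} {y z : E} (hf : ConvexOn ℝ s f) (hy : y ∈ s) (hz : z ∈ s)
    (hd : DifferentiableAt ℝ f y) : f y + fderiv ℝ f y (z - y) ≤ f z := by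
  have hline : ConvexOn ℝ (AffineMap.lineMap (k := ℝ) y z ⁻¹' s) (f ∘ AffineMap.lineMap y z) :=
    hf.comp_affineMap _
  have hder : HasDerivAt (f ∘ AffineMap.lineMap (k := ℝ) y z) (fderiv ℝ f y (z - y)) 0 :=
    hd.hasFDerivAt.comp_hasDerivAt_of_eq 0 AffineMap.hasDerivAt_lineMap (by simp)
  have := hline.le_slope_of_hasDerivAt (by simpa using hy) (by simpa using hz) one_pos hder
  simp only [slope_def_field, Function.comp_apply, AffineMap.lineMap_apply_zero,
    AffineMap.lineMap_apply_one, sub_zero, div_one] at this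
  linarith

variable {F : Type*} [NormedAddCommGroup F] [InnerProductSpace ℝ F]

theorem ConvexOn.add_inner_gradient_le [CompleteSpace F] {f : F → ℝ} {y : F}
    (hf : ConvexOn ℝ univ f) (hd : DifferentiableAt ℝ f y) (z : F) :
    f y + ⟪gradient f y, z - y⟫ ≤ f z := by
  simpa [gradient, InnerProductSpace.toDual_symm_apply] using
    hf.add_fderiv_le (mem_univ y) (mem_univ z) hd

theorem eq_gradient_of_forall_add_inner_le [CompleteSpace F] {f : F → ℝ} {x y : F}
    (hd : DifferentiableAt ℝ f y) (hx : ∀ z, f y + ⟪x, z - y⟫ ≤ f z) : x = gradient f y := by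
  have hmin : IsLocalMin (fun z => f z - ⟪x, z⟫) y := Eventually.of_forall fun z => by
    have := hx z
    rw [inner_sub_right] at this
    dsimp only
    linarith
  have hzero := hmin.hasFDerivAt_eq_zero (hd.hasFDerivAt.sub (innerSL ℝ x).hasFDerivAt)
  refine ext_inner_right ℝ fun v => ?_
  have := congrArg (fun L : F →L[ℝ] ℝ => L v) hzero
  simp only [sub_apply, innerSL_apply_apply, zero_apply, sub_eq_zero] at this
  rw [gradient, InnerProductSpace.toDual_symm_apply, this]

noncomputable def fenchelConjugate (f : F → ℝ) (x : F) : EReal :=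
  ⨆ z, ((⟪x, z⟫ - f z : ℝ) : EReal)

theorem inner_sub_le_fenchelConjugate (f : F → ℝ) (x z : F) :
    ((⟪x, z⟫ - f z : ℝ) : EReal) ≤ fenchelConjugate f x :=
  le_iSup (fun z => ((⟪x, z⟫ - f z : ℝ) : EReal)) z

theorem measurable_fenchelConjugate [MeasurableSpace F] [OpensMeasurableSpace F] (f : F → ℝ) :
    Measurable (fenchelConjugate f) := by
  refine (lowerSemicontinuous_iSup fun z => ?_).measurable
  exact (continuous_coe_real_ereal.comp
    ((continuous_id.inner continuous_const).sub continuous_const)).lowerSemicontinuous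

theorem ConvexOn.fenchelConjugate_gradient [CompleteSpace F] {f : F → ℝ} {y : F}
    (hf : ConvexOn ℝ univ f) (hd : DifferentiableAt ℝ f y) :
    fenchelConjugate f (gradient f y) = ((⟪gradient f y, y⟫ - f y : ℝ) : EReal) := by
  refine le_antisymm (iSup_le fun z => EReal.coe_le_coe_iff.2 ?_)
    (inner_sub_le_fenchelConjugate f _ y)
  have := hf.add_inner_gradient_le hd z
  rw [inner_sub_right] at this
  linarith

theorem eq_gradient_of_fenchelConjugate_le [CompleteSpace F] {f : F → ℝ} {x y : F}
    (hd : DifferentiableAt ℝ f y) (hxy : fenchelConjugate f x ≤ ((⟪x, y⟫ - f y : ℝ) : EReal)) :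
    x = gradient f y := by
  refine eq_gradient_of_forall_add_inner_le hd fun z => ?_
  have := EReal.coe_le_coe_iff.1 ((inner_sub_le_fenchelConjugate f x z).trans hxy)
  rw [inner_sub_right]
  linarith

theorem comp_ae_eq_of_map_eq_self_of_comp_ae_le {α : Type*} [MeasurableSpace α] {μ : Measure α}
    [IsFiniteMeasure μ] {f : α → ℝ} {S : α → α} (hf : Measurable f) (hS : AEMeasurable S μ)
    (hmap : μ.map S = μ) (hle : f ∘ S ≤ᵐ[μ] f) : f ∘ S =ᵐ[μ] f := by
  have hsuper : ∀ q : ℚ, S ⁻¹' {x | q < f x} =ᵐ[μ] {x | q < f x} := fun q => by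
    have hm : MeasurableSet {x | q < f x} := measurableSet_lt measurable_const hf
    refine ae_eq_of_ae_subset_of_measure_ge (hle.mono fun x hx h => lt_of_lt_of_le h hx) ?_
      (hS.nullMeasurable hm) (measure_ne_top _ _)
    rw [← Measure.map_apply_of_aemeasurable hS hm, hmap]
  filter_upwards [hle, ae_all_iff.2 fun q => (hsuper q).mem_iff] with x hx hq
  refine le_antisymm hx (not_lt.1 fun h => ?_)
  obtain ⟨q, hSq, hqf⟩ := exists_rat_btwn h
  exact hSq.not_gt ((hq q).2 hqf)

theorem ae_gradient_gradient_eq_self [MeasurableSpace F] [OpensMeasurableSpace F]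
    [CompleteSpace F] {μ ν : Measure F} [IsFiniteMeasure μ] {φ ψ : F → ℝ}
    (hφ : ConvexOn ℝ univ φ) (hψ : ConvexOn ℝ univ ψ) (hφm : Measurable φ)
    (hφd : ∀ᵐ x ∂μ, DifferentiableAt ℝ φ x) (hψd : ∀ᵐ y ∂ν, DifferentiableAt ℝ ψ y)
    (hRm : AEMeasurable (gradient φ) μ) (hQm : AEMeasurable (gradient ψ) ν)
    (hpushR : μ.map (gradient φ) = ν) (hpushQ : ν.map (gradient ψ) = μ) :
    ∀ᵐ x ∂μ, gradient ψ (gradient φ x) = x := by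
  let H : F → ℝ := fun x => (fenchelConjugate ψ x).toReal - φ x
  have hHm : Measurable H := (measurable_fenchelConjugate ψ).ereal_toReal.sub hφm
  have hQm' : AEMeasurable (gradient ψ) (μ.map (gradient φ)) := hpushR ▸ hQm
  have hSμ : μ.map (gradient ψ ∘ gradient φ) = μ := by
    rw [← AEMeasurable.map_map_of_aemeasurable hQm' hRm, hpushR, hpushQ]
  have hψd' : ∀ᵐ x ∂μ, DifferentiableAt ℝ ψ (gradient φ x) := ae_of_ae_map hRm (hpushR ▸ hψd)
  have hfin : ∀ᵐ x ∂μ, fenchelConjugate ψ x ≠ ⊤ := by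
    rw [← hpushQ]
    refine (ae_map_iff hQm ((measurable_fenchelConjugate ψ) (measurableSet_singleton ⊤)).compl).2 ?_
    filter_upwards [hψd] with y hy
    change fenchelConjugate ψ (gradient ψ y) ≠ ⊤
    rw [hψ.fenchelConjugate_gradient hy]
    exact EReal.coe_ne_top _
  have hyoung : ∀ᵐ x ∂μ,
      ⟪x, gradient φ x⟫ - ψ (gradient φ x) ≤ (fenchelConjugate ψ x).toReal := by
    filter_upwards [hfin] with x hx
    exact EReal.coe_le_coe_iff.1 ((inner_sub_le_fenchelConjugate ψ x _).trans
      (EReal.le_coe_toReal hx))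
  have hdesc : ∀ᵐ x ∂μ, H (gradient ψ (gradient φ x)) + (fenchelConjugate ψ x).toReal
      ≤ H x + (⟪x, gradient φ x⟫ - ψ (gradient φ x)) := by
    filter_upwards [hφd, hψd'] with x hdx hdy
    have := hφ.add_inner_gradient_le hdx (gradient ψ (gradient φ x))
    simp only [H, hψ.fenchelConjugate_gradient hdy, EReal.toReal_coe]
    rw [inner_sub_right] at this
    linarith [real_inner_comm x (gradient φ x),
      real_inner_comm (gradient φ x) (gradient ψ (gradient φ x))]
  have hHS : H ∘ (gradient ψ ∘ gradient φ) =ᵐ[μ] H := by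
    refine comp_ae_eq_of_map_eq_self_of_comp_ae_le hHm (hQm'.comp_aemeasurable hRm) hSμ ?_
    filter_upwards [hyoung, hdesc] with x h₁ h₂
    exact le_of_add_le_add_right (h₂.trans (by linarith))
  filter_upwards [hyoung, hdesc, hHS, hψd', hfin] with x h₁ h₂ hHx hdx hfx
  refine (eq_gradient_of_fenchelConjugate_le hdx ((EReal.le_coe_toReal hfx).trans ?_)).symm
  simp only [Function.comp_apply] at hHx
  exact EReal.coe_le_coe_iff.2 (by linarith)

theorem mccann_inversion_general (d : ℕ)
    (μ ν : Measure (EuclideanSpace ℝ (Fin d)))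
    [IsProbabilityMeasure μ] [IsProbabilityMeasure ν]
    (hμ : μ ≪ volume) (hν : ν ≪ volume)
    (φ ψ : EuclideanSpace ℝ (Fin d) → ℝ)
    (hφ : ConvexOn ℝ Set.univ φ) (hψ : ConvexOn ℝ Set.univ ψ)
    (R Q : EuclideanSpace ℝ (Fin d) → EuclideanSpace ℝ (Fin d))
    (hR : ∀ x, R x = gradient φ x) (hQ : ∀ y, Q y = gradient ψ y)
    (hpushR : μ.map R = ν) (hpushQ : ν.map Q = μ) :
    (∀ᵐ x ∂μ, Q (R x) = x) ∧ (∀ᵐ y ∂ν, R (Q y) = y) := by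
  obtain rfl : R = gradient φ := funext hR
  obtain rfl : Q = gradient ψ := funext hQ
  have hRm : AEMeasurable (gradient φ) μ := aemeasurable_of_map_neZero (hpushR ▸ inferInstance)
  have hQm : AEMeasurable (gradient ψ) ν := aemeasurable_of_map_neZero (hpushQ ▸ inferInstance)
  have hφd : ∀ᵐ x ∂μ, DifferentiableAt ℝ φ x := hμ.ae_le (hφ.locallyLipschitz.ae_differentiableAt _)
  have hψd : ∀ᵐ y ∂ν, DifferentiableAt ℝ ψ y := hν.ae_le (hψ.locallyLipschitz.ae_differentiableAt _)
  exact ⟨ae_gradient_gradient_eq_self hφ hψ hφ.locallyLipschitz.continuous.measurable hφd hψd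
      hRm hQm hpushR hpushQ,
    ae_gradient_gradient_eq_self hψ hφ hψ.locallyLipschitz.continuous.measurable hψd hφd
      hQm hRm hpushQ hpushR⟩

/-- McCann's theorem (inversion part): the rank map `R = ∇φ` pushing `μ` to `ν`
and the quantile map `Q = ∇ψ` pushing `ν` to `μ` are inverse to each other
almost everywhere. -/
theorem mccann_inversion (d : ℕ) (hd : 1 ≤ d)
    (μ ν : Measure (EuclideanSpace ℝ (Fin d)))
    [IsProbabilityMeasure μ] [IsProbabilityMeasure ν]
    (hμ : μ ≪ volume) (hν : ν ≪ volume)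
    (φ ψ : EuclideanSpace ℝ (Fin d) → ℝ)
    (hφ : ConvexOn ℝ Set.univ φ) (hψ : ConvexOn ℝ Set.univ ψ)
    (R Q : EuclideanSpace ℝ (Fin d) → EuclideanSpace ℝ (Fin d))
    (hR : ∀ x, R x = gradient φ x) (hQ : ∀ y, Q y = gradient ψ y)
    (hpushR : μ.map R = ν) (hpushQ : ν.map Q = μ) :
    (∀ᵐ x ∂μ, Q (R x) = x) ∧ (∀ᵐ y ∂ν, R (Q y) = y) :=
  mccann_inversion_general d μ ν hμ hν φ ψ hφ hψ R Q hR hQ hpushR hpushQ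
end

section
/- Let n ≥ 1 and let C be a real n × n matrix. For ε > 0 let P⁰(ε) denote the unique minimizer over the transport polytope Π_n of ∑_{i,j} C_{ij} P_{ij} − ε H(P), where H(P) = −∑_{i,j} P_{ij} log P_{ij}. Let M ⊆ Π_n be the (nonempty, convex, compact) set of minimizers of P ↦ ∑_{i,j} C_{ij} P_{ij} over Π_n, and let P* be the unique element of M maximizing H over M. Then P⁰(ε) converges to P* as ε → 0⁺. -/
open scoped BigOperators
open Filter

/-- The transport polytope: `n × n` matrices with nonnegative entries whose
every row sum and every column sum equals `1/n`. -/
def transportPolytope (n : ℕ) : Set (Matrix (Fin n) (Fin n) ℝ) :=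
  {P | (∀ i j, 0 ≤ P i j) ∧ (∀ i, ∑ j, P i j = 1 / n) ∧ (∀ j, ∑ i, P i j = 1 / n)}

/-- The entropy of a matrix, `H(P) = -∑ P_{ij} log P_{ij}` (with `0 log 0 = 0`,
as `Real.log 0 = 0`). -/
noncomputable def matrixEntropy {n : ℕ} (P : Matrix (Fin n) (Fin n) ℝ) : ℝ :=
  -∑ i, ∑ j, P i j * Real.log (P i j)

/- ### Auxiliary lemmas -/

lemma tp_closed (n : ℕ) : IsClosed (transportPolytope n) := by
  have h : transportPolytope n =
      (⋂ i, ⋂ j, {P : Matrix (Fin n) (Fin n) ℝ | 0 ≤ P i j}) ∩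
      ((⋂ i, {P : Matrix (Fin n) (Fin n) ℝ | ∑ j, P i j = 1 / n}) ∩
       (⋂ j, {P : Matrix (Fin n) (Fin n) ℝ | ∑ i, P i j = 1 / n})) := by
    ext P
    simp [transportPolytope, Set.mem_iInter, and_assoc]
  rw [h]
  refine (isClosed_iInter fun i => isClosed_iInter fun j =>
      isClosed_le continuous_const (continuous_id.matrix_elem i j)).inter
    (IsClosed.inter ?_ ?_)
  · exact isClosed_iInter fun i => isClosed_eq
      (continuous_finset_sum _ fun j _ => continuous_id.matrix_elem i j) continuous_const
  · exact isClosed_iInter fun j => isClosed_eq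
      (continuous_finset_sum _ fun i _ => continuous_id.matrix_elem i j) continuous_const

lemma tp_entry_le_one {n : ℕ} {P : Matrix (Fin n) (Fin n) ℝ}
    (hP : P ∈ transportPolytope n) (i j : Fin n) : P i j ≤ 1 := by
  obtain ⟨hpos, hrow, -⟩ := hP
  have h1 : P i j ≤ ∑ j', P i j' :=
    Finset.single_le_sum (fun j' _ => hpos i j') (Finset.mem_univ j)
  have hn : (1 : ℝ) ≤ (n : ℝ) := by
    have : 0 < n := i.pos
    exact_mod_cast this
  have : (1 : ℝ) / n ≤ 1 := by
    rw [div_le_one (by linarith)]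
    exact hn
  calc P i j ≤ 1 / n := by rw [← hrow i]; exact h1
    _ ≤ 1 := this

lemma tp_compact (n : ℕ) : IsCompact (transportPolytope n) := by
  have hK : IsCompact {P : Matrix (Fin n) (Fin n) ℝ | ∀ i j, P i j ∈ Set.Icc (0 : ℝ) 1} := by
    have h := isCompact_univ_pi (ι := Fin n) (X := fun _ => Fin n → ℝ)
      (s := fun _ => Set.pi Set.univ fun _ => Set.Icc (0 : ℝ) 1)
      (fun _ => isCompact_univ_pi fun _ => isCompact_Icc)
    have heq : {P : Matrix (Fin n) (Fin n) ℝ | ∀ i j, P i j ∈ Set.Icc (0 : ℝ) 1} =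
        (Set.pi Set.univ fun _ : Fin n => Set.pi Set.univ fun _ : Fin n => Set.Icc (0 : ℝ) 1) := by
      ext P
      simp only [Set.mem_setOf_eq]
      constructor
      · exact fun hP i _ j _ => hP i j
      · exact fun hP i j => hP i (Set.mem_univ i) j (Set.mem_univ j)
    rw [heq]
    exact h
  refine hK.of_isClosed_subset (tp_closed n) ?_
  intro P hP i j
  exact ⟨hP.1 i j, tp_entry_le_one hP i j⟩

lemma entropy_nonneg {n : ℕ} {P : Matrix (Fin n) (Fin n) ℝ}
    (hP : P ∈ transportPolytope n) : 0 ≤ matrixEntropy P := by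
  have h : ∑ i, ∑ j, P i j * Real.log (P i j) ≤ 0 := by
    apply Finset.sum_nonpos
    intro i _
    apply Finset.sum_nonpos
    intro j _
    have h0 : 0 ≤ P i j := hP.1 i j
    have h1 : P i j ≤ 1 := tp_entry_le_one hP i j
    exact mul_nonpos_of_nonneg_of_nonpos h0 (Real.log_nonpos h0 h1)
  simp only [matrixEntropy]
  linarith

lemma neg_mul_log_le_one {x : ℝ} (hx : 0 ≤ x) : -(x * Real.log x) ≤ 1 := by
  rcases eq_or_lt_of_le hx with h | h
  · simp [← h]
  · have hlog : Real.log (1 / x) ≤ 1 / x - 1 :=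
      Real.log_le_sub_one_of_pos (by positivity)
    rw [Real.log_div one_ne_zero (ne_of_gt h), Real.log_one] at hlog
    have := mul_le_mul_of_nonneg_left hlog hx
    have hxx : x * (1 / x - 1) = 1 - x := by field_simp
    nlinarith

lemma entropy_le {n : ℕ} {P : Matrix (Fin n) (Fin n) ℝ}
    (hP : P ∈ transportPolytope n) : matrixEntropy P ≤ (n : ℝ) ^ 2 := by
  have h : matrixEntropy P = ∑ i, ∑ j, -(P i j * Real.log (P i j)) := by
    simp [matrixEntropy, Finset.sum_neg_distrib]
  rw [h]
  calc ∑ i, ∑ j : Fin n, -(P i j * Real.log (P i j))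
      ≤ ∑ _i : Fin n, ∑ _j : Fin n, (1 : ℝ) := by
        refine Finset.sum_le_sum fun i _ => Finset.sum_le_sum fun j _ => ?_
        exact neg_mul_log_le_one (hP.1 i j)
    _ = (n : ℝ) ^ 2 := by simp [sq]

lemma cost_continuous {n : ℕ} (C : Matrix (Fin n) (Fin n) ℝ) :
    Continuous fun P : Matrix (Fin n) (Fin n) ℝ => ∑ i, ∑ j, C i j * P i j :=
  continuous_finset_sum _ fun i _ => continuous_finset_sum _ fun j _ =>
    continuous_const.mul (continuous_id.matrix_elem i j)

lemma entropy_continuous {n : ℕ} :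
    Continuous fun P : Matrix (Fin n) (Fin n) ℝ => matrixEntropy P := by
  unfold matrixEntropy
  exact (continuous_finset_sum _ fun i _ => continuous_finset_sum _ fun j _ =>
    Real.continuous_mul_log.comp (continuous_id.matrix_elem i j)).neg

/-- Uniqueness of the maximal-entropy minimizer, via strict concavity of entropy. -/
lemma entropy_max_unique {n : ℕ} (C : Matrix (Fin n) (Fin n) ℝ)
    (M : Set (Matrix (Fin n) (Fin n) ℝ))
    (hM : M = {P ∈ transportPolytope n |
      ∀ Q ∈ transportPolytope n, ∑ i, ∑ j, C i j * P i j ≤ ∑ i, ∑ j, C i j * Q i j})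
    (Pstar : Matrix (Fin n) (Fin n) ℝ) (hPstarMem : Pstar ∈ M)
    (hPstarMax : ∀ P ∈ M, matrixEntropy P ≤ matrixEntropy Pstar)
    (Q : Matrix (Fin n) (Fin n) ℝ) (hQ : Q ∈ M)
    (hH : matrixEntropy Pstar ≤ matrixEntropy Q) : Q = Pstar := by
  by_contra hne
  subst hM
  obtain ⟨hQPi, hQmin⟩ := hQ
  obtain ⟨hPPi, hPmin⟩ := hPstarMem
  -- the midpoint
  set R : Matrix (Fin n) (Fin n) ℝ := fun i j => (Q i j + Pstar i j) / 2 with hR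
  have hRPi : R ∈ transportPolytope n := by
    refine ⟨fun i j => by have := hQPi.1 i j; have := hPPi.1 i j; positivity, ?_, ?_⟩
    · intro i
      have : ∑ j, (Q i j + Pstar i j) / 2 = (∑ j, Q i j + ∑ j, Pstar i j) / 2 := by
        rw [← Finset.sum_div, Finset.sum_add_distrib]
      simp only [hR, this, hQPi.2.1 i, hPPi.2.1 i]
      ring
    · intro j
      have : ∑ i, (Q i j + Pstar i j) / 2 = (∑ i, Q i j + ∑ i, Pstar i j) / 2 := by
        rw [← Finset.sum_div, Finset.sum_add_distrib]
      simp only [hR, this, hQPi.2.2 j, hPPi.2.2 j]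
      ring
  have hcostR : ∀ S ∈ transportPolytope n,
      ∑ i, ∑ j, C i j * R i j ≤ ∑ i, ∑ j, C i j * S i j := by
    intro S hS
    have hsplit : (∑ i, ∑ j, C i j * R i j) * 2 =
        (∑ i, ∑ j, C i j * Q i j) + ∑ i, ∑ j, C i j * Pstar i j := by
      rw [Finset.sum_mul, ← Finset.sum_add_distrib]
      refine Finset.sum_congr rfl fun i _ => ?_
      rw [Finset.sum_mul, ← Finset.sum_add_distrib]
      refine Finset.sum_congr rfl fun j _ => ?_
      simp only [hR]
      ring
    have h1 := hQmin S hS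
    have h2 := hPmin S hS
    linarith
  have hRM : R ∈ {P ∈ transportPolytope n |
      ∀ S ∈ transportPolytope n, ∑ i, ∑ j, C i j * P i j ≤ ∑ i, ∑ j, C i j * S i j} :=
    ⟨hRPi, hcostR⟩
  have hRle : matrixEntropy R ≤ matrixEntropy Pstar := hPstarMax R hRM
  -- strict concavity gives matrixEntropy R > (H Q + H Pstar)/2 ≥ H Pstar
  obtain ⟨i₀, j₀, hij⟩ : ∃ i j, Q i j ≠ Pstar i j := by
    by_contra hcon
    push_neg at hcon
    exact hne (by ext i j; exact hcon i j)
  have key : ∑ p : Fin n × Fin n, R p.1 p.2 * Real.log (R p.1 p.2) <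
      ∑ p : Fin n × Fin n,
        (Q p.1 p.2 * Real.log (Q p.1 p.2) + Pstar p.1 p.2 * Real.log (Pstar p.1 p.2)) / 2 := by
    refine Finset.sum_lt_sum (fun p _ => ?_) ⟨(i₀, j₀), Finset.mem_univ _, ?_⟩
    · have hcv := Real.convexOn_mul_log.2 (Set.mem_Ici.2 (hQPi.1 p.1 p.2))
        (Set.mem_Ici.2 (hPPi.1 p.1 p.2)) (by norm_num : (0:ℝ) ≤ 1/2)
        (by norm_num : (0:ℝ) ≤ 1/2) (by norm_num)
      simp only [smul_eq_mul] at hcv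
      have harg : (1/2 : ℝ) * Q p.1 p.2 + (1/2 : ℝ) * Pstar p.1 p.2 = R p.1 p.2 := by
        simp only [hR]; ring
      rw [harg] at hcv
      linarith
    · have hcv := Real.strictConvexOn_mul_log.2 (Set.mem_Ici.2 (hQPi.1 i₀ j₀))
        (Set.mem_Ici.2 (hPPi.1 i₀ j₀)) hij (by norm_num : (0:ℝ) < 1/2)
        (by norm_num : (0:ℝ) < 1/2) (by norm_num)
      simp only [smul_eq_mul] at hcv
      have harg : (1/2 : ℝ) * Q i₀ j₀ + (1/2 : ℝ) * Pstar i₀ j₀ = R i₀ j₀ := by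
        simp only [hR]; ring
      rw [harg] at hcv
      linarith
  have hflat : ∀ A : Matrix (Fin n) (Fin n) ℝ,
      ∑ i, ∑ j, A i j * Real.log (A i j) =
        ∑ p : Fin n × Fin n, A p.1 p.2 * Real.log (A p.1 p.2) := by
    intro A
    rw [← Finset.sum_product']
    rfl
  have hsum : ∑ p : Fin n × Fin n,
      (Q p.1 p.2 * Real.log (Q p.1 p.2) + Pstar p.1 p.2 * Real.log (Pstar p.1 p.2)) / 2 =
      ((∑ p : Fin n × Fin n, Q p.1 p.2 * Real.log (Q p.1 p.2)) +
       ∑ p : Fin n × Fin n, Pstar p.1 p.2 * Real.log (Pstar p.1 p.2)) / 2 := by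
    rw [← Finset.sum_div, Finset.sum_add_distrib]
  have hHR : matrixEntropy Pstar < matrixEntropy R := by
    have hQe : matrixEntropy Q =
        -∑ p : Fin n × Fin n, Q p.1 p.2 * Real.log (Q p.1 p.2) := by
      rw [matrixEntropy, hflat Q]
    have hPe : matrixEntropy Pstar =
        -∑ p : Fin n × Fin n, Pstar p.1 p.2 * Real.log (Pstar p.1 p.2) := by
      rw [matrixEntropy, hflat Pstar]
    have hRe : matrixEntropy R =
        -∑ p : Fin n × Fin n, R p.1 p.2 * Real.log (R p.1 p.2) := by
      rw [matrixEntropy, hflat R]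
    rw [hsum] at key
    rw [hQe, hPe] at hH
    rw [hPe, hRe]
    linarith
  linarith

/-- As `ε → 0⁺`, the entropic optimal transport plan `P⁰(ε)` converges to the
unregularized optimal plan of maximal entropy. -/
theorem entropic_ot_plan_convergence (n : ℕ) (hn : 1 ≤ n)
    (C : Matrix (Fin n) (Fin n) ℝ)
    (P0 : ℝ → Matrix (Fin n) (Fin n) ℝ)
    (hP0 : ∀ ε : ℝ, 0 < ε → P0 ε ∈ transportPolytope n ∧
      ∀ P ∈ transportPolytope n,
        (∑ i, ∑ j, C i j * P0 ε i j) - ε * matrixEntropy (P0 ε) ≤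
          (∑ i, ∑ j, C i j * P i j) - ε * matrixEntropy P)
    (M : Set (Matrix (Fin n) (Fin n) ℝ))
    (hM : M = {P ∈ transportPolytope n |
      ∀ Q ∈ transportPolytope n, ∑ i, ∑ j, C i j * P i j ≤ ∑ i, ∑ j, C i j * Q i j})
    (Pstar : Matrix (Fin n) (Fin n) ℝ) (hPstarMem : Pstar ∈ M)
    (hPstarMax : ∀ P ∈ M, matrixEntropy P ≤ matrixEntropy Pstar) :
    Tendsto P0 (nhdsWithin 0 (Set.Ioi 0)) (nhds Pstar) := by
  have hPstarPi : Pstar ∈ transportPolytope n := by rw [hM] at hPstarMem; exact hPstarMem.1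
  have hPstarMin : ∀ S ∈ transportPolytope n,
      ∑ i, ∑ j, C i j * Pstar i j ≤ ∑ i, ∑ j, C i j * S i j := by
    rw [hM] at hPstarMem; exact hPstarMem.2
  -- entropy of P0 ε dominates entropy of Pstar
  have hlow : ∀ ε : ℝ, 0 < ε → matrixEntropy Pstar ≤ matrixEntropy (P0 ε) := by
    intro ε hε
    have h1 := (hP0 ε hε).2 Pstar hPstarPi
    have h2 := hPstarMin (P0 ε) (hP0 ε hε).1
    nlinarith
  rw [tendsto_iff_ultrafilter]
  intro g hg
  have hmemIoi : ∀ᶠ ε in (g : Filter ℝ), ε ∈ Set.Ioi (0 : ℝ) := hg self_mem_nhdsWithin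
  have hmem : ∀ᶠ ε in (g : Filter ℝ), P0 ε ∈ transportPolytope n :=
    hmemIoi.mono fun ε hε => (hP0 ε hε).1
  have hle : ↑(g.map P0) ≤ Filter.principal (transportPolytope n) := by
    rw [Ultrafilter.coe_map, Filter.le_principal_iff]
    exact hmem
  obtain ⟨Q, hQPi, hQle⟩ := (tp_compact n).ultrafilter_le_nhds (g.map P0) hle
  have hP0t : Tendsto P0 (g : Filter ℝ) (nhds Q) := by
    rw [Ultrafilter.coe_map] at hQle
    exact hQle
  have htend0 : Tendsto (fun ε : ℝ => ε) (g : Filter ℝ) (nhds 0) :=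
    tendsto_id'.2 (hg.trans nhdsWithin_le_nhds)
  -- Q is a cost minimizer
  have hQM : Q ∈ M := by
    rw [hM]
    refine ⟨hQPi, fun S hS => ?_⟩
    have hev : ∀ᶠ ε in (g : Filter ℝ),
        (∑ i, ∑ j, C i j * P0 ε i j) ≤ (∑ i, ∑ j, C i j * S i j) + ε * (n : ℝ) ^ 2 := by
      refine hmemIoi.mono fun ε hε => ?_
      have h1 := (hP0 ε hε).2 S hS
      have h2 : matrixEntropy (P0 ε) ≤ (n : ℝ) ^ 2 := entropy_le (hP0 ε hε).1
      have h3 : 0 ≤ matrixEntropy S := entropy_nonneg hS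
      have hε' : (0 : ℝ) < ε := hε
      nlinarith
    have hL : Tendsto (fun ε => ∑ i, ∑ j, C i j * P0 ε i j) (g : Filter ℝ)
        (nhds (∑ i, ∑ j, C i j * Q i j)) :=
      ((cost_continuous C).tendsto Q).comp hP0t
    have hRt : Tendsto (fun ε : ℝ => (∑ i, ∑ j, C i j * S i j) + ε * (n : ℝ) ^ 2)
        (g : Filter ℝ) (nhds ((∑ i, ∑ j, C i j * S i j) + 0 * (n : ℝ) ^ 2)) :=
      tendsto_const_nhds.add (htend0.mul_const _)
    have := le_of_tendsto_of_tendsto hL hRt hev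
    simpa using this
  -- Q has entropy at least that of Pstar
  have hHQ : matrixEntropy Pstar ≤ matrixEntropy Q := by
    have hHt : Tendsto (fun ε => matrixEntropy (P0 ε)) (g : Filter ℝ)
        (nhds (matrixEntropy Q)) := (entropy_continuous.tendsto Q).comp hP0t
    have hev : ∀ᶠ ε in (g : Filter ℝ), matrixEntropy Pstar ≤ matrixEntropy (P0 ε) :=
      hmemIoi.mono fun ε hε => hlow ε hε
    exact le_of_tendsto_of_tendsto tendsto_const_nhds hHt hev
  have hQeq : Q = Pstar := entropy_max_unique C M hM Pstar
    hPstarMem hPstarMax Q hQM hHQ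
  rw [← hQeq]
  exact hP0t
end
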